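/- Let f : ℝ³ → ℝ be differentiable and nowhere zero (a function of p = (p₀,p₁,p₂)), let V : ℝ² → ℝ be differentiable, and set l(q,p) = (∂f/∂p₁)(p)·q₂ − (∂f/∂p₂)(p)·q₁. On ℝ⁶ with coordinates (q₀,q₁,q₂,p₀,p₁,p₂), define the Hamiltonian H(q,p) = −p₀² + p₁² + p₂² + e^{4q₀}·V(q₁,q₂), the matrix Ω(q,p) = (1/f(p)) · [[0,0,0,−1,0,0],[0,0,0,0,−1,0],[0,0,0,0,0,−1],[1,0,0,0,0,0],[0,1,0,0,0,l/f],[0,0,1,0,−l/f,0]], and the vector field X_H(q,p) = (2p₀f, −(2p₁f + e^{4q₀}·l·∂V/∂q₂), −(2p₂f − e^{4q₀}·l·∂V/∂q₁), 4e^{4q₀}·f·V, e^{4q₀}·f·∂V/∂q₁, e^{4q₀}·f·∂V/∂q₂). Then for every x ∈ ℝ⁶ and every w ∈ ℝ⁶: X_H(x)ᵀ · Ω(x) · w = DH(x)(w). That is, X_H is the Hamiltonian vector field of H with respect to the deformed symplectic form; in particular DH(x)(X_H(x)) = 0, so X_H is tangent to the constraint surface H = 0. -/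

import Mathlib

open Matrix

/-- The closure-condition function `l(q,p) = (∂f/∂p₁)(p)·q₂ − (∂f/∂p₂)(p)·q₁` on the phase
space `ℝ⁶` with coordinates `(q₀,q₁,q₂,p₀,p₁,p₂)`. -/
noncomputable def lfun (f : (Fin 3 → ℝ) → ℝ) (x : Fin 6 → ℝ) : ℝ :=
  fderiv ℝ f ![x 3, x 4, x 5] (Pi.single 1 1) * x 2 -
    fderiv ℝ f ![x 3, x 4, x 5] (Pi.single 2 1) * x 1

/-- The Hamiltonian constraint of the Bianchi models in Misner variables,
`H = −p₀² + p₁² + p₂² + e^{4q₀}·V(q₁,q₂)`. -/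
noncomputable def Hfun (V : (Fin 2 → ℝ) → ℝ) (x : Fin 6 → ℝ) : ℝ :=
  -(x 3) ^ 2 + (x 4) ^ 2 + (x 5) ^ 2 + Real.exp (4 * x 0) * V ![x 1, x 2]

/-- Matrix of the deformed symplectic form of the GUP Bianchi model in Misner variables. -/
noncomputable def OmegaB (f : (Fin 3 → ℝ) → ℝ) (x : Fin 6 → ℝ) : Matrix (Fin 6) (Fin 6) ℝ :=
  (f ![x 3, x 4, x 5])⁻¹ •
    !![0, 0, 0, -1, 0, 0;
       0, 0, 0, 0, -1, 0;
       0, 0, 0, 0, 0, -1;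
       1, 0, 0, 0, 0, 0;
       0, 1, 0, 0, 0, lfun f x / f ![x 3, x 4, x 5];
       0, 0, 1, 0, -(lfun f x / f ![x 3, x 4, x 5]), 0]

/-- The deformed Hamiltonian vector field of the GUP Bianchi model. -/
noncomputable def XHfun (f : (Fin 3 → ℝ) → ℝ) (V : (Fin 2 → ℝ) → ℝ) (x : Fin 6 → ℝ) :
    Fin 6 → ℝ :=
  let fp := f ![x 3, x 4, x 5]
  let l := lfun f x
  let dV1 := fderiv ℝ V ![x 1, x 2] (Pi.single 0 1)
  let dV2 := fderiv ℝ V ![x 1, x 2] (Pi.single 1 1)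
  ![2 * x 3 * fp,
    -(2 * x 4 * fp + Real.exp (4 * x 0) * l * dV2),
    -(2 * x 5 * fp - Real.exp (4 * x 0) * l * dV1),
    4 * Real.exp (4 * x 0) * fp * V ![x 1, x 2],
    Real.exp (4 * x 0) * fp * dV1,
    Real.exp (4 * x 0) * fp * dV2]

/-!
Once `DH(x)` is written as `w ↦ ∇H(x) ⬝ᵥ w`, everything is pointwise algebra: row by row,
`X_H(x)ᵀ·Ω(x) = ∇H(x)`, because the factor `f` in `X_H` cancels the overall `1/f` of `Ω` and the
entries `±l/f` of `Ω` cancel exactly the `l`-terms of the `q₁`, `q₂` components of `X_H`.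
Tangency to `H = 0` then follows because `Ω` is antisymmetric.
-/

theorem map_eq_sum_smul_map_single {R M ι F : Type*} [Semiring R] [AddCommMonoid M] [Module R M]
    [Fintype ι] [DecidableEq ι] [FunLike F (ι → R) M] [LinearMapClass F R (ι → R) M]
    (φ : F) (v : ι → R) : φ v = ∑ i, v i • φ (Pi.single i 1) := by
  conv_lhs => rw [← Finset.univ_sum_single v]
  simp only [map_sum, ← map_smul, ← Pi.single_smul, smul_eq_mul, mul_one]

theorem Matrix.dotProduct_mulVec_self_eq_zero_of_transpose_eq_neg {R n : Type*} [CommRing R]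
    [NoZeroDivisors R] [CharZero R] [Fintype n] {A : Matrix n n R} (hA : Aᵀ = -A) (v : n → R) :
    v ⬝ᵥ A *ᵥ v = 0 := by
  have h := dotProduct_transpose_mulVec A v v
  rw [hA, neg_mulVec, dotProduct_neg] at h
  exact self_eq_neg.1 h.symm

noncomputable def gradHfun (V : (Fin 2 → ℝ) → ℝ) (x : Fin 6 → ℝ) : Fin 6 → ℝ :=
  ![4 * Real.exp (4 * x 0) * V ![x 1, x 2],
    Real.exp (4 * x 0) * fderiv ℝ V ![x 1, x 2] (Pi.single 0 1),
    Real.exp (4 * x 0) * fderiv ℝ V ![x 1, x 2] (Pi.single 1 1),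
    -(2 * x 3), 2 * x 4, 2 * x 5]

theorem fderiv_Hfun_apply {V : (Fin 2 → ℝ) → ℝ} {x : Fin 6 → ℝ}
    (hV : DifferentiableAt ℝ V ![x 1, x 2]) (w : Fin 6 → ℝ) :
    fderiv ℝ (Hfun V) x w = gradHfun V x ⬝ᵥ w := by
  have hq : HasFDerivAt (fun y : Fin 6 → ℝ => ![y 1, y 2])
      (.pi ![.proj 1, .proj 2] : (Fin 6 → ℝ) →L[ℝ] Fin 2 → ℝ) x :=
    hasFDerivAt_pi.2 fun i => by
      fin_cases i
      exacts [hasFDerivAt_apply 1 x, hasFDerivAt_apply 2 x]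
  have hH : HasFDerivAt (Hfun V) _ x :=
    ((((hasFDerivAt_apply 3 x).pow 2).neg.add ((hasFDerivAt_apply 4 x).pow 2)).add
      ((hasFDerivAt_apply 5 x).pow 2)).add
      (((hasFDerivAt_apply 0 x).const_mul 4).exp.mul (hV.hasFDerivAt.comp x hq))
  rw [hH.fderiv]
  simp only [_root_.add_apply, _root_.neg_apply, _root_.smul_apply, ContinuousLinearMap.comp_apply,
    ContinuousLinearMap.coe_pi']
  conv_lhs => rw [map_eq_sum_smul_map_single (fderiv ℝ V _)]
  simp [gradHfun, dotProduct, Fin.sum_univ_six, Fin.sum_univ_two]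
  ring

theorem OmegaB_transpose (f : (Fin 3 → ℝ) → ℝ) (x : Fin 6 → ℝ) :
    (OmegaB f x)ᵀ = -OmegaB f x := by
  ext i j
  fin_cases i <;> fin_cases j <;> simp [OmegaB]

theorem XHfun_vecMul_OmegaB (f : (Fin 3 → ℝ) → ℝ) (V : (Fin 2 → ℝ) → ℝ) {x : Fin 6 → ℝ}
    (hf : f ![x 3, x 4, x 5] ≠ 0) : XHfun f V x ᵥ* OmegaB f x = gradHfun V x := by
  ext i
  fin_cases i <;> simp [XHfun, OmegaB, gradHfun, vecMul, dotProduct, Fin.sum_univ_six] <;>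
    field_simp <;> ring

theorem stmt_16_general (f : (Fin 3 → ℝ) → ℝ) (hf0 : ∀ p, f p ≠ 0)
    (V : (Fin 2 → ℝ) → ℝ) (hV : Differentiable ℝ V) :
    (∀ x w : Fin 6 → ℝ,
      XHfun f V x ⬝ᵥ (OmegaB f x).mulVec w = fderiv ℝ (Hfun V) x w) ∧
    ∀ x : Fin 6 → ℝ, fderiv ℝ (Hfun V) x (XHfun f V x) = 0 := by
  have hamiltonian : ∀ x w : Fin 6 → ℝ,
      XHfun f V x ⬝ᵥ (OmegaB f x).mulVec w = fderiv ℝ (Hfun V) x w := fun x w => by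
    rw [dotProduct_mulVec, XHfun_vecMul_OmegaB f V (hf0 _), fderiv_Hfun_apply (hV _)]
  refine ⟨hamiltonian, fun x => ?_⟩
  rw [← hamiltonian]
  exact dotProduct_mulVec_self_eq_zero_of_transpose_eq_neg (OmegaB_transpose f x) _

/-- `X_H` is the Hamiltonian vector field of `H` with respect to the deformed symplectic
form: `X_H(x)ᵀ·Ω(x)·w = DH(x)(w)` for all `x, w`; in particular `DH(x)(X_H(x)) = 0`, so
`X_H` is tangent to the constraint surface `H = 0`. -/
theorem stmt_16 (f : (Fin 3 → ℝ) → ℝ) (hf : Differentiable ℝ f) (hf0 : ∀ p, f p ≠ 0)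
    (V : (Fin 2 → ℝ) → ℝ) (hV : Differentiable ℝ V) :
    (∀ x w : Fin 6 → ℝ,
      XHfun f V x ⬝ᵥ (OmegaB f x).mulVec w = fderiv ℝ (Hfun V) x w) ∧
    ∀ x : Fin 6 → ℝ, fderiv ℝ (Hfun V) x (XHfun f V x) = 0 :=
  stmt_16_general f hf0 V hV
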